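/- For Model 1 in dimension d = 1, assume P(X_e ≤ −x) = e^{−x²f(x)} for x ≥ M₀ with f positive and increasing, fix δ > 0 with 2δM₀ < ε, and for N large define ε_j = 100ε / (f(2^j)·Σ_{k=−log δ}^N 1/f(2^k)) for j = −log δ,…,N, the index set J = {k ∈ {−log δ,…,N} : 2^k ε_k ≥ M₀}, and the event V_J^N = {∀ j ∈ J, X_e ≤ −2^j ε_j for all e ∈ T_{N−j}}. Then P(V_J^N) ≥ exp{−2^{2N+2} / Σ_{k=−log δ}^N 1/f(2^k)}; in particular, if Σ_k 1/f(2^k) = ∞, then lim_{N→∞} (1/2^{2N}) log P(V_J^N) = 0. -/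

import Mathlib

/-!
The shells `T_k` of edges of Model 1 (`d = 1`): `T_k` is a finite set of edges
with `|T_k| ≤ 2^{2k+1}`, pairwise disjoint; the weights `{X_e}` are i.i.d.
mean-zero with lower tail `P(X_e ≤ -x) = e^{-x² f(x)}` for `x ≥ M₀`.
With `δ = 2^{-l}` (so `log₂ δ = -l`), for `j = l, …, N` set
`ε_j = 100 ε / (f(2^j) Σ_{k=l}^N 1/f(2^k))`,
`J = {j ∈ {l, …, N} : 2^j ε_j ≥ M₀}` and
`V_J^N = {∀ j ∈ J, ∀ e ∈ T_{N-j}, X_e ≤ -2^j ε_j}`.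
-/

open MeasureTheory ProbabilityTheory Filter

namespace Stmt19

/-- `Σ_{k=-log₂ δ}^{N} 1/f(2^k)`, with `-log₂ δ = l`. -/
noncomputable def S (f : ℝ → ℝ) (l N : ℕ) : ℝ :=
  ∑ k ∈ Finset.Icc l N, 1 / f (2 ^ k)

/-- `ε_j = 100 ε / (f(2^j) · Σ_{k=-log₂ δ}^N 1/f(2^k))`. -/
noncomputable def epsj (f : ℝ → ℝ) (ε : ℝ) (l N j : ℕ) : ℝ :=
  100 * ε / (f (2 ^ j) * S f l N)

/-- The event `V_J^N = {∀ j ∈ J, X_e ≤ -2^j ε_j ∀ e ∈ T_{N-j}}`, where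
`J = {j ∈ {-log₂ δ, …, N} : 2^j ε_j ≥ M₀}`. -/
def Vevent {E : Type} (T : ℕ → Finset E) (X : E → Ω → ℝ)
    (f : ℝ → ℝ) (ε M₀ : ℝ) (l N : ℕ) : Set Ω :=
  {ω | ∀ j : ℕ, l ≤ j → j ≤ N → M₀ ≤ 2 ^ j * epsj f ε l N j →
    ∀ e ∈ T (N - j), X e ω ≤ -(2 ^ j * epsj f ε l N j)}

end Stmt19

open Stmt19

theorem ProbabilityTheory.iIndepFun.measure_biInter_biInter_preimage
    {Ω ι E β : Type*} [MeasurableSpace Ω] [MeasurableSpace β] {P : Measure Ω}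
    {X : E → Ω → β} (hX : iIndepFun X P) {J : Finset ι} {T : ι → Finset E}
    (hT : (J : Set ι).PairwiseDisjoint T) {B : ι → Set β} (hB : ∀ j, MeasurableSet (B j)) :
    P (⋂ j ∈ J, ⋂ e ∈ T j, X e ⁻¹' B j) = ∏ j ∈ J, ∏ e ∈ T j, P (X e ⁻¹' B j) := by
  classical
  -- the constraint on an edge collects all shells containing it; by disjointness there is one
  set B' : E → Set β := fun e => ⋂ j ∈ J.filter (e ∈ T ·), B j
  have hB' : ∀ j ∈ J, ∀ e ∈ T j, B' e = B j := by
    intro j hj e he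
    have hsingleton : J.filter (e ∈ T ·) = {j} := by
      refine Finset.eq_singleton_iff_unique_mem.mpr ⟨Finset.mem_filter.mpr ⟨hj, he⟩, fun i hi ↦ ?_⟩
      rw [Finset.mem_filter] at hi
      by_contra hij
      exact Finset.disjoint_left.mp (hT hi.1 hj hij) hi.2 he
    simp only [B', hsingleton, Finset.mem_singleton, Set.iInter_iInter_eq_left]
  have hset : ⋂ j ∈ J, ⋂ e ∈ T j, X e ⁻¹' B j = ⋂ e ∈ J.biUnion T, X e ⁻¹' B' e := by
    ext ω
    simp only [B', Set.mem_iInter, Set.mem_preimage, Finset.mem_biUnion, Finset.mem_filter]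
    exact ⟨fun h e _ j hj => h j hj.1 e hj.2,
      fun h j hj e he => h e ⟨j, hj, he⟩ j ⟨hj, he⟩⟩
  have hmeas : ∀ e, MeasurableSet (B' e) := fun e =>
    Finset.measurableSet_biInter _ fun j _ => hB j
  rw [hset, hX.meas_biInter fun e _ => ⟨B' e, hmeas e, rfl⟩, Finset.prod_biUnion hT]
  exact Finset.prod_congr rfl fun j hj => Finset.prod_congr rfl fun e he => by
    rw [hB' j hj e he]

theorem tendsto_inv_two_pow_mul_logb_of_exp_neg_le {p s : ℕ → ℝ} (hs : Tendsto s atTop atTop)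
    (hp : ∀ N, p N ≤ 1)
    (hlow : ∀ᶠ N in atTop, Real.exp (-(2 ^ (2 * N + 2)) / s N) ≤ p N) :
    Tendsto (fun N : ℕ => (1 / (2 : ℝ) ^ (2 * N)) * Real.logb 2 (p N)) atTop (nhds 0) := by
  have hlog2 : 0 < Real.log 2 := Real.log_pos one_lt_two
  have hlim : Tendsto (fun N => (-4 / Real.log 2) / s N) atTop (nhds 0) :=
    tendsto_const_nhds.div_atTop hs
  refine tendsto_of_tendsto_of_tendsto_of_le_of_le' hlim tendsto_const_nhds ?_ ?_
  · filter_upwards [hlow, hs.eventually_gt_atTop 0] with N hN hsN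
    have hlogb : (-(2 ^ (2 * N + 2)) / s N) / Real.log 2 ≤ Real.logb 2 (p N) := by
      simpa only [Real.logb, Real.log_exp] using
        Real.logb_le_logb_of_le one_lt_two (Real.exp_pos _) hN
    have h4 : (2 : ℝ) ^ (2 * N + 2) = 4 * 2 ^ (2 * N) := by rw [pow_add]; ring
    calc -4 / Real.log 2 / s N
        = 1 / 2 ^ (2 * N) * ((-(2 ^ (2 * N + 2)) / s N) / Real.log 2) := by
          rw [h4]; field_simp
      _ ≤ _ := by gcongr
  · filter_upwards [hlow] with N hN
    exact mul_nonpos_of_nonneg_of_nonpos (by positivity)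
      (Real.logb_nonpos one_lt_two ((Real.exp_pos _).le.trans hN) (hp N))

namespace Stmt19

variable {f : ℝ → ℝ} {ε : ℝ} {l N : ℕ}

theorem S_pos (hf : ∀ x, 0 < f x) (hlN : l ≤ N) : 0 < S f l N :=
  Finset.sum_pos (fun _ _ => one_div_pos.mpr (hf _)) ⟨l, Finset.mem_Icc.mpr ⟨le_rfl, hlN⟩⟩

theorem epsj_self (hf : ∀ x, 0 < f x) : epsj f ε l l l = 100 * ε := by
  have := (hf (2 ^ l)).ne'
  simp only [epsj, S, Finset.Icc_self, Finset.sum_singleton]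
  field_simp

theorem tendsto_S_atTop (hf : ∀ x, 0 < f x) (h : ¬ Summable fun k : ℕ => 1 / f (2 ^ k)) :
    Tendsto (S f l) atTop atTop := by
  have hpartial := (not_summable_iff_tendsto_nat_atTop_of_nonneg
    fun k => (one_div_pos.mpr (hf (2 ^ k))).le).mp h
  refine (tendsto_atTop_add_const_right _ (-∑ k ∈ Finset.range l, 1 / f (2 ^ k))
    (hpartial.comp (tendsto_add_atTop_nat 1))).congr' ?_
  filter_upwards [eventually_ge_atTop l] with N hN
  rw [Function.comp_apply, ← sub_eq_add_neg, ← Finset.sum_Ico_eq_sub _ (by omega), S,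
    Finset.Ico_add_one_right_eq_Icc]

theorem sq_two_pow_mul_epsj_mul (hf : ∀ x, 0 < f x) (j : ℕ) :
    (2 ^ j * epsj f ε l N j) ^ 2 * f (2 ^ j)
      = 2 ^ (2 * j) * (100 * ε) ^ 2 / S f l N ^ 2 * (1 / f (2 ^ j)) := by
  have := (hf (2 ^ j)).ne'
  rw [epsj]
  field_simp
  ring

theorem card_mul_sq_two_pow_mul_epsj_mul_le {E : Type*} {T : ℕ → Finset E}
    (hcard : ∀ k, (T k).card ≤ 2 ^ (2 * k + 1)) (hf : ∀ x, 0 < f x) {j : ℕ} (hjN : j ≤ N) :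
    (T (N - j)).card * ((2 ^ j * epsj f ε l N j) ^ 2 * f (2 ^ j))
      ≤ 2 ^ (2 * N + 1) * (100 * ε) ^ 2 / S f l N ^ 2 * (1 / f (2 ^ j)) := by
  have hpow : (2 : ℝ) ^ (2 * (N - j) + 1) * 2 ^ (2 * j) = 2 ^ (2 * N + 1) := by
    rw [← pow_add]; congr 1; omega
  calc (T (N - j)).card * ((2 ^ j * epsj f ε l N j) ^ 2 * f (2 ^ j))
      ≤ 2 ^ (2 * (N - j) + 1) * ((2 ^ j * epsj f ε l N j) ^ 2 * f (2 ^ j)) := by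
        gcongr
        · exact mul_nonneg (sq_nonneg _) (hf _).le
        · exact_mod_cast hcard (N - j)
    _ = 2 ^ (2 * N + 1) * (100 * ε) ^ 2 / S f l N ^ 2 * (1 / f (2 ^ j)) := by
        rw [sq_two_pow_mul_epsj_mul hf, ← hpow]; ring

theorem sum_card_mul_sq_two_pow_mul_epsj_mul_le {E : Type*} {T : ℕ → Finset E}
    (hcard : ∀ k, (T k).card ≤ 2 ^ (2 * k + 1)) (hf : ∀ x, 0 < f x) (hε : 0 < ε)
    (hε1 : 100 * ε < 1) (hlN : l ≤ N) {J : Finset ℕ} (hJ : J ⊆ Finset.Icc l N) :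
    ∑ j ∈ J, (T (N - j)).card * ((2 ^ j * epsj f ε l N j) ^ 2 * f (2 ^ j))
      ≤ 2 ^ (2 * N + 2) / S f l N := by
  have hS := S_pos hf hlN
  calc ∑ j ∈ J, (T (N - j)).card * ((2 ^ j * epsj f ε l N j) ^ 2 * f (2 ^ j))
      ≤ ∑ j ∈ Finset.Icc l N,
          (T (N - j)).card * ((2 ^ j * epsj f ε l N j) ^ 2 * f (2 ^ j)) :=
        Finset.sum_le_sum_of_subset_of_nonneg hJ fun j _ _ =>
          mul_nonneg (Nat.cast_nonneg _) (mul_nonneg (sq_nonneg _) (hf _).le)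
    _ ≤ ∑ j ∈ Finset.Icc l N,
          2 ^ (2 * N + 1) * (100 * ε) ^ 2 / S f l N ^ 2 * (1 / f (2 ^ j)) :=
        Finset.sum_le_sum fun j hj =>
          card_mul_sq_two_pow_mul_epsj_mul_le hcard hf (Finset.mem_Icc.mp hj).2
    _ = 2 ^ (2 * N + 1) * (100 * ε) ^ 2 / S f l N := by
        rw [← Finset.mul_sum, ← S]; field_simp
    _ ≤ 2 ^ (2 * N + 2) / S f l N := by
        gcongr
        calc (2 : ℝ) ^ (2 * N + 1) * (100 * ε) ^ 2 ≤ 2 ^ (2 * N + 1) * 1 := by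
              gcongr; nlinarith
          _ ≤ 2 ^ (2 * N + 2) := by
              rw [mul_one]; exact pow_le_pow_right₀ one_le_two (by omega)

noncomputable def indexSetJ (f : ℝ → ℝ) (ε M₀ : ℝ) (l N : ℕ) : Finset ℕ :=
  (Finset.Icc l N).filter fun j => M₀ ≤ 2 ^ j * epsj f ε l N j

theorem Vevent_eq_biInter {Ω : Type*} {E : Type} (T : ℕ → Finset E) (X : E → Ω → ℝ)
    (M₀ : ℝ) :
    Vevent T X f ε M₀ l N = ⋂ j ∈ indexSetJ f ε M₀ l N, ⋂ e ∈ T (N - j),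
      X e ⁻¹' Set.Iic (-(2 ^ j * epsj f ε l N j)) := by
  ext ω
  simp only [Vevent, indexSetJ, Set.mem_ofPred_eq, Set.mem_iInter, Set.mem_preimage,
    Set.mem_Iic, Finset.mem_filter, Finset.mem_Icc]
  exact ⟨fun h j hj => h j hj.1.1 hj.1.2 hj.2, fun h j hlj hjN hM => h j ⟨⟨hlj, hjN⟩, hM⟩⟩

theorem measure_Vevent_eq_prod {Ω : Type*} {E : Type} [MeasurableSpace Ω]
    {P : Measure Ω} {T : ℕ → Finset E} (hdisj : ∀ k k', k ≠ k' → Disjoint (T k) (T k'))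
    {X : E → Ω → ℝ} (hindep : iIndepFun X P) (M₀ : ℝ) :
    P (Vevent T X f ε M₀ l N) = ∏ j ∈ indexSetJ f ε M₀ l N, ∏ e ∈ T (N - j),
      P (X e ⁻¹' Set.Iic (-(2 ^ j * epsj f ε l N j))) := by
  rw [Vevent_eq_biInter]
  refine hindep.measure_biInter_biInter_preimage (fun j hj j' hj' hne => hdisj _ _ ?_)
    fun _ => measurableSet_Iic
  have hjN := (Finset.mem_Icc.mp (Finset.mem_filter.mp hj).1).2
  have hj'N := (Finset.mem_Icc.mp (Finset.mem_filter.mp hj').1).2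
  omega

theorem exp_neg_le_measure_Vevent {Ω : Type*} {E : Type} [MeasurableSpace Ω]
    {P : Measure Ω} [IsProbabilityMeasure P] {T : ℕ → Finset E}
    (hcard : ∀ k, (T k).card ≤ 2 ^ (2 * k + 1))
    (hdisj : ∀ k k', k ≠ k' → Disjoint (T k) (T k')) {X : E → Ω → ℝ}
    (hindep : iIndepFun X P) {M₀ : ℝ} (hf : ∀ x, 0 < f x) (hfmono : Monotone f)
    (htail : ∀ e, ∀ x : ℝ, M₀ ≤ x →
      (P {ω | X e ω ≤ -x}).toReal = Real.exp (-(x ^ 2 * f x)))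
    (hε : 0 < ε) (hsmall : ∀ N j : ℕ, l ≤ j → j ≤ N → epsj f ε l N j < 1) (hlN : l ≤ N) :
    Real.exp (-(2 ^ (2 * N + 2)) / S f l N) ≤ (P (Vevent T X f ε M₀ l N)).toReal := by
  set J := indexSetJ f ε M₀ l N
  set c : ℕ → ℝ := fun j => 2 ^ j * epsj f ε l N j
  have hε1 : 100 * ε < 1 := epsj_self (ε := ε) hf ▸ hsmall l l le_rfl le_rfl
  -- `ε_j < 1` gives `2^j ε_j ≤ 2^j`, so monotonicity of `f` lowers each exact tail
  have hedge : ∀ j ∈ J, ∀ e,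
      Real.exp (-(c j ^ 2 * f (2 ^ j))) ≤ (P (X e ⁻¹' Set.Iic (-c j))).toReal := by
    intro j hj e
    obtain ⟨hlj, hjN⟩ := Finset.mem_Icc.mp (Finset.mem_filter.mp hj).1
    have hcj : c j ≤ 2 ^ j :=
      mul_le_of_le_one_right (by positivity) (hsmall N j hlj hjN).le
    change _ ≤ (P {ω | X e ω ≤ -c j}).toReal
    rw [htail e (c j) (Finset.mem_filter.mp hj).2]
    exact Real.exp_le_exp.mpr
      (neg_le_neg (mul_le_mul_of_nonneg_left (hfmono hcj) (sq_nonneg _)))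
  have hsum := sum_card_mul_sq_two_pow_mul_epsj_mul_le hcard hf hε hε1 hlN (J := J)
    (Finset.filter_subset _ _)
  rw [measure_Vevent_eq_prod hdisj hindep]
  simp only [ENNReal.toReal_prod]
  calc Real.exp (-(2 ^ (2 * N + 2)) / S f l N)
      ≤ Real.exp (-∑ j ∈ J, (T (N - j)).card * (c j ^ 2 * f (2 ^ j))) := by
        rw [neg_div]; exact Real.exp_le_exp.mpr (neg_le_neg hsum)
    _ = ∏ j ∈ J, ∏ _e ∈ T (N - j), Real.exp (-(c j ^ 2 * f (2 ^ j))) := by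
        simp only [← Finset.sum_neg_distrib, Real.exp_sum, ← mul_neg, Real.exp_nat_mul,
          Finset.prod_const]
    _ ≤ _ := Finset.prod_le_prod (fun _ _ => by positivity) fun j hj =>
        Finset.prod_le_prod (fun _ _ => by positivity) fun e _ => hedge j hj e

end Stmt19

theorem stmt_19_general
    {Ω : Type} [MeasurableSpace Ω] (P : Measure Ω) [IsProbabilityMeasure P]
    {E : Type} (T : ℕ → Finset E)
    (hcard : ∀ k, (T k).card ≤ 2 ^ (2 * k + 1))
    (hdisj : ∀ k k', k ≠ k' → Disjoint (T k) (T k'))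
    (X : E → Ω → ℝ)
    (hindep : iIndepFun X P)
    (M₀ : ℝ)
    (f : ℝ → ℝ) (hfpos : ∀ x, 0 < f x) (hfmono : Monotone f)
    (htail : ∀ e, ∀ x : ℝ, M₀ ≤ x →
      (P {ω | X e ω ≤ -x}).toReal = Real.exp (-(x ^ 2 * f x)))
    (ε : ℝ) (hε : 0 < ε)
    (l : ℕ)
    (hsmall : ∀ N j : ℕ, l ≤ j → j ≤ N → epsj f ε l N j < 1) :
    (∀ N : ℕ, l ≤ N →
        Real.exp (-(2 ^ (2 * N + 2)) / S f l N) ≤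
          (P (Vevent T X f ε M₀ l N)).toReal) ∧
      (¬ Summable (fun k : ℕ => 1 / f (2 ^ k)) →
        Tendsto (fun N : ℕ =>
            (1 / (2 : ℝ) ^ (2 * N)) *
              Real.logb 2 ((P (Vevent T X f ε M₀ l N)).toReal))
          atTop (nhds 0)) := by
  have hlower : ∀ N : ℕ, l ≤ N →
      Real.exp (-(2 ^ (2 * N + 2)) / S f l N) ≤ (P (Vevent T X f ε M₀ l N)).toReal :=
    fun N hlN => exp_neg_le_measure_Vevent hcard hdisj hindep hfpos hfmono htail hε hsmall hlN
  refine ⟨hlower, fun hdiv => ?_⟩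
  exact tendsto_inv_two_pow_mul_logb_of_exp_neg_le (tendsto_S_atTop hfpos hdiv)
    (fun _ => measureReal_le_one) ((eventually_ge_atTop l).mono hlower)

/-- display (54) and the ensuing limit.  For Model 1 in
`d = 1` with lower tail `P(X_e ≤ -x) = e^{-x² f(x)}` for `x ≥ M₀` (`f` positive
increasing), `δ = 2^{-l}` with `2 δ M₀ < ε`, and `ε_j < 1` for all `j` (WLOG):
`P(V_J^N) ≥ exp{-2^{2N+2} / Σ_{k=-log₂ δ}^N 1/f(2^k)}`; in particular, if
`Σ_k 1/f(2^k) = ∞`, then `(1/2^{2N}) log₂ P(V_J^N) → 0` as `N → ∞`. -/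
theorem stmt_19
    {Ω : Type} [MeasurableSpace Ω] (P : Measure Ω) [IsProbabilityMeasure P]
    {E : Type} (T : ℕ → Finset E)
    (hcard : ∀ k, (T k).card ≤ 2 ^ (2 * k + 1))
    (hdisj : ∀ k k', k ≠ k' → Disjoint (T k) (T k'))
    (X : E → Ω → ℝ)
    (hmeas : ∀ e, Measurable (X e))
    (hindep : iIndepFun X P)
    (hident : ∀ e e', Measure.map (X e) P = Measure.map (X e') P)
    (hmean : ∀ e, ∫ ω, X e ω ∂P = 0)
    (M₀ : ℝ) (hM₀ : 0 < M₀)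
    (f : ℝ → ℝ) (hfpos : ∀ x, 0 < f x) (hfmono : Monotone f)
    (htail : ∀ e, ∀ x : ℝ, M₀ ≤ x →
      (P {ω | X e ω ≤ -x}).toReal = Real.exp (-(x ^ 2 * f x)))
    (ε δ : ℝ) (hε : 0 < ε)
    (l : ℕ) (hl : 1 ≤ l) (hδ : δ = (2 : ℝ) ^ (-(l : ℤ)))
    (hδM : 2 * δ * M₀ < ε)
    (hsmall : ∀ N j : ℕ, l ≤ j → j ≤ N → epsj f ε l N j < 1) :
    (∀ N : ℕ, l ≤ N →
        Real.exp (-(2 ^ (2 * N + 2)) / S f l N) ≤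
          (P (Vevent T X f ε M₀ l N)).toReal) ∧
      (¬ Summable (fun k : ℕ => 1 / f (2 ^ k)) →
        Tendsto (fun N : ℕ =>
            (1 / (2 : ℝ) ^ (2 * N)) *
              Real.logb 2 ((P (Vevent T X f ε M₀ l N)).toReal))
          atTop (nhds 0)) :=
  stmt_19_general P T hcard hdisj X hindep M₀ f hfpos hfmono htail ε hε l hsmall
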